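/- arXiv:1812.01916 — 4 statements merged into one kernel-verified Lean document; each statement's English description precedes it below -/
import Mathlib

section
/- The Jacobson radical of the ring R equals the set J = {m(0,0,c,d) : c,d ∈ GF(2)}, a subset of R with exactly four elements. -/
open Matrix

/-- The matrix m(a,b,c,d) = [[a,c,d],[0,b,0],[0,0,b]] over GF(2). -/
def m (a b c d : ZMod 2) : Matrix (Fin 3) (Fin 3) (ZMod 2) :=
  !![a, c, d; 0, b, 0; 0, 0, b]

lemma m_mul (a b c d a' b' c' d' : ZMod 2) :
    m a b c d * m a' b' c' d' =
      m (a * a') (b * b') (a * c' + c * b') (a * d' + d * b') := by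
  ext i j
  fin_cases i <;> fin_cases j <;>
    simp [m, Matrix.mul_apply, Fin.sum_univ_three, Matrix.vecHead, Matrix.vecTail]

/-- The ring R, as a subring of the 3×3 matrices over GF(2). -/
def Rring : Subring (Matrix (Fin 3) (Fin 3) (ZMod 2)) where
  carrier := {A | ∃ a b c d : ZMod 2, A = m a b c d}
  zero_mem' := ⟨0, 0, 0, 0, by ext i j; fin_cases i <;> fin_cases j <;> simp [m, Matrix.vecHead, Matrix.vecTail]⟩
  one_mem' := ⟨1, 1, 0, 0, by ext i j; fin_cases i <;> fin_cases j <;> simp [m, Matrix.one_apply, Matrix.vecHead, Matrix.vecTail]⟩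
  add_mem' := by
    rintro A B ⟨a, b, c, d, rfl⟩ ⟨a', b', c', d', rfl⟩
    exact ⟨a + a', b + b', c + c', d + d',
      by ext i j; fin_cases i <;> fin_cases j <;> simp [m, Matrix.vecHead, Matrix.vecTail]⟩
  neg_mem' := by
    rintro A ⟨a, b, c, d, rfl⟩
    exact ⟨-a, -b, -c, -d,
      by ext i j; fin_cases i <;> fin_cases j <;> simp [m, Matrix.vecHead, Matrix.vecTail]⟩
  mul_mem' := by
    rintro A B ⟨a, b, c, d, rfl⟩ ⟨a', b', c', d', rfl⟩
    exact ⟨a * a', b * b', a * c' + c * b', a * d' + d * b', m_mul a b c d a' b' c' d'⟩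

lemma m_mem (a b c d : ZMod 2) : m a b c d ∈ Rring := ⟨a, b, c, d, rfl⟩

/-- The element m(a,b,c,d) viewed as an element of the ring R. -/
def mm (a b c d : ZMod 2) : Rring := ⟨m a b c d, m_mem a b c d⟩

/-- The set J = {m(0,0,c,d) : c,d ∈ GF(2)}, as a subset of R. -/
def Jset : Set Rring := {x | ∃ c d : ZMod 2, x = mm 0 0 c d}

/-! `J` is the kernel of the diagonal map `R → 𝔽₂ × 𝔽₂`, `m(a,b,c,d) ↦ (a,b)`. Its elements square
to zero, so it lies in the Jacobson radical; conversely the Jacobson radical is killed by every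
surjection onto a semisimple ring such as `𝔽₂ × 𝔽₂`. -/

theorem Ideal.le_jacobson_bot_of_forall_isNilpotent {R : Type*} [Ring R] {I : Ideal R}
    (h : ∀ x ∈ I, IsNilpotent x) : I ≤ jacobson ⊥ := by
  intro x hx
  refine mem_jacobson_iff.2 fun y => ?_
  obtain ⟨u, hu⟩ := (h _ (I.mul_mem_left y hx)).isUnit_add_one
  refine ⟨↑u⁻¹, ?_⟩
  rw [mem_bot, mul_assoc, ← mul_add_one (↑u⁻¹ : R), ← hu, Units.inv_mul, sub_self]

theorem RingHom.jacobson_bot_le_ker {R S : Type*} [Ring R] [Ring S] [IsSemisimpleRing S]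
    (f : R →+* S) (hf : Function.Surjective f) : Ideal.jacobson ⊥ ≤ RingHom.ker f := by
  have : RingHomSurjective f := ⟨hf⟩
  intro x hx
  rw [Ideal.jacobson_bot] at hx
  simpa [IsSemisimpleRing.jacobson_eq_bot] using Ring.le_comap_jacobson f hx

namespace Rring

theorem exists_eq_mm (x : Rring) : ∃ a b c d : ZMod 2, x = mm a b c d := by
  obtain ⟨a, b, c, d, hx⟩ := x.2
  exact ⟨a, b, c, d, Subtype.ext hx⟩

theorem mm_mul (a b c d a' b' c' d' : ZMod 2) :
    mm a b c d * mm a' b' c' d' =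
      mm (a * a') (b * b') (a * c' + c * b') (a * d' + d * b') :=
  Subtype.ext (m_mul a b c d a' b' c' d')

theorem mm_zero : mm 0 0 0 0 = 0 := by
  ext i j
  fin_cases i <;> fin_cases j <;> rfl

def diag : Rring →+* ZMod 2 × ZMod 2 where
  toFun x := (x.1 0 0, x.1 1 1)
  map_one' := rfl
  map_zero' := rfl
  map_add' _ _ := rfl
  map_mul' x y := by
    obtain ⟨a, b, c, d, rfl⟩ := exists_eq_mm x
    obtain ⟨a', b', c', d', rfl⟩ := exists_eq_mm y
    rw [mm_mul]
    rfl

theorem diag_mm (a b c d : ZMod 2) : diag (mm a b c d) = (a, b) := rfl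

theorem diag_surjective : Function.Surjective diag := fun p => ⟨mm p.1 p.2 0 0, rfl⟩

theorem coe_ker_diag : (RingHom.ker diag : Set Rring) = Jset := by
  ext x
  obtain ⟨a, b, c, d, rfl⟩ := exists_eq_mm x
  simp only [SetLike.mem_coe, RingHom.mem_ker, diag_mm, Prod.mk_eq_zero]
  constructor
  · rintro ⟨rfl, rfl⟩
    exact ⟨c, d, rfl⟩
  · rintro ⟨c', d', h⟩
    exact ⟨congrArg (fun x => diag x |>.1) h, congrArg (fun x => diag x |>.2) h⟩

theorem sq_eq_zero_of_mem_ker_diag {x : Rring} (hx : x ∈ RingHom.ker diag) : x ^ 2 = 0 := by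
  obtain ⟨c, d, rfl⟩ : x ∈ Jset := coe_ker_diag ▸ hx
  rw [sq, mm_mul]
  simpa using mm_zero

theorem ncard_Jset : Jset.ncard = 4 := by
  have hJ : Jset = Set.range fun p : ZMod 2 × ZMod 2 => mm 0 0 p.1 p.2 := by
    ext x
    simp [Jset, eq_comm]
  have hinj : Function.Injective fun p : ZMod 2 × ZMod 2 => mm 0 0 p.1 p.2 := fun p q h =>
    Prod.ext (congrArg (fun x : Rring => x.1 0 1) h) (congrArg (fun x : Rring => x.1 0 2) h)
  rw [hJ, Set.ncard_range_of_injective hinj]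
  simp

end Rring

/-- The Jacobson radical of R equals J, a subset of R with exactly four elements. -/
theorem jacobson_radical_eq_J :
    ((⊥ : Ideal Rring).jacobson : Set Rring) = Jset ∧ Jset.ncard = 4 := by
  refine ⟨?_, Rring.ncard_Jset⟩
  rw [← Rring.coe_ker_diag]
  exact congrArg _ <| le_antisymm (Rring.diag.jacobson_bot_le_ker Rring.diag_surjective)
    (Ideal.le_jacobson_bot_of_forall_isNilpotent fun _ hx =>
      ⟨2, Rring.sq_eq_zero_of_mem_ker_diag hx⟩)
end

section
/- The sets I_l = {m(0,b,c,d) : b,c,d ∈ GF(2)} and I_r = {m(a,0,c,d) : a,c,d ∈ GF(2)} are two-sided ideals of R, each of cardinality 8, each is a maximal two-sided ideal of R, and they are the only maximal two-sided ideals of R. -/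
/-
The diagonal entries a and b are multiplicative, so x ↦ a and x ↦ b are ring homomorphisms
R → GF(2) whose kernels are I_l and I_r. Conversely, with e₁ = m(1,0,0,0) and e₂ = m(0,1,0,0) one
has e₁ x e₁ = a(x) e₁ and e₂ x e₂ = b(x) e₂; so an ideal not contained in I_l contains e₁, one not
contained in I_r contains e₂, and one containing both contains e₁ + e₂ = 1. Hence every proper
ideal lies in I_l or in I_r, and as these are incomparable they are the only coatoms.
-/

open Matrix

/-- The set I_l = {m(0,b,c,d) : b,c,d ∈ GF(2)}, as a subset of R. -/
def Il : Set Rring := {x | ∃ b c d : ZMod 2, x = mm 0 b c d}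

/-- The set I_r = {m(a,0,c,d) : a,c,d ∈ GF(2)}, as a subset of R. -/
def Ir : Set Rring := {x | ∃ a c d : ZMod 2, x = mm a 0 c d}

theorem isCoatom_iff_eq_or_eq_of_forall_le_or_le_or_eq_top {α : Type*} [PartialOrder α]
    [OrderTop α] {a b : α} (h : ∀ x, x ≤ a ∨ x ≤ b ∨ x = ⊤) (ha : a ≠ ⊤) (hb : b ≠ ⊤)
    (hab : ¬ a ≤ b) (hba : ¬ b ≤ a) (x : α) : IsCoatom x ↔ x = a ∨ x = b := by
  constructor
  · intro hx
    rcases h x with hxa | hxb | rfl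
    · exact .inl (hxa.eq_of_not_lt fun hlt => ha (hx.2 a hlt))
    · exact .inr (hxb.eq_of_not_lt fun hlt => hb (hx.2 b hlt))
    · exact absurd rfl hx.1
  · rintro (rfl | rfl)
    · refine ⟨ha, fun y hy => ?_⟩
      rcases h y with hyx | hyb | hy'
      exacts [absurd hyx hy.not_ge, absurd (hy.le.trans hyb) hab, hy']
    · refine ⟨hb, fun y hy => ?_⟩
      rcases h y with hya | hyx | hy'
      exacts [absurd (hy.le.trans hya) hba, absurd hyx hy.not_ge, hy']

theorem TwoSidedIdeal.ker_ne_top {R S : Type*} [NonAssocRing R] [NonAssocSemiring S]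
    [Nontrivial S] (f : R →+* S) : TwoSidedIdeal.ker f ≠ ⊤ := fun h => by
  simpa [TwoSidedIdeal.mem_ker] using (TwoSidedIdeal.one_mem_iff _).2 h

theorem exists_eq_mm (x : Rring) : ∃ a b c d, x = mm a b c d := by
  obtain ⟨_, a, b, c, d, rfl⟩ := x
  exact ⟨a, b, c, d, rfl⟩

theorem mm_mul (a b c d a' b' c' d' : ZMod 2) :
    mm a b c d * mm a' b' c' d' = mm (a * a') (b * b') (a * c' + c * b') (a * d' + d * b') :=
  Subtype.ext (m_mul a b c d a' b' c' d')

theorem mm_add (a b c d a' b' c' d' : ZMod 2) :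
    mm a b c d + mm a' b' c' d' = mm (a + a') (b + b') (c + c') (d + d') := by
  apply Subtype.ext
  ext i j
  fin_cases i <;> fin_cases j <;> simp [mm, m]

theorem mm_one : mm 1 1 0 0 = 1 := by
  apply Subtype.ext
  ext i j
  fin_cases i <;> fin_cases j <;> simp [mm, m]

theorem mm_inj {a b c d a' b' c' d' : ZMod 2} :
    mm a b c d = mm a' b' c' d' ↔ a = a' ∧ b = b' ∧ c = c' ∧ d = d' := by
  refine ⟨fun h => ?_, by rintro ⟨rfl, rfl, rfl, rfl⟩; rfl⟩
  have entry (i j : Fin 3) : m a b c d i j = m a' b' c' d' i j :=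
    congrArg (fun x : Rring => x.1 i j) h
  exact ⟨by simpa [m] using entry 0 0, by simpa [m] using entry 1 1,
    by simpa [m] using entry 0 1, by simpa [m] using entry 0 2⟩

def diagFst : Rring →+* ZMod 2 where
  toFun x := x.1 0 0
  map_one' := by rw [← mm_one]; rfl
  map_zero' := rfl
  map_add' _ _ := rfl
  map_mul' x y := by
    obtain ⟨a, b, c, d, rfl⟩ := exists_eq_mm x
    obtain ⟨a', b', c', d', rfl⟩ := exists_eq_mm y
    rw [mm_mul]
    rfl

def diagSnd : Rring →+* ZMod 2 where
  toFun x := x.1 1 1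
  map_one' := by rw [← mm_one]; rfl
  map_zero' := rfl
  map_add' _ _ := rfl
  map_mul' x y := by
    obtain ⟨a, b, c, d, rfl⟩ := exists_eq_mm x
    obtain ⟨a', b', c', d', rfl⟩ := exists_eq_mm y
    rw [mm_mul]
    rfl

@[simp] theorem diagFst_mm (a b c d : ZMod 2) : diagFst (mm a b c d) = a := rfl

@[simp] theorem diagSnd_mm (a b c d : ZMod 2) : diagSnd (mm a b c d) = b := rfl

theorem coe_ker_diagFst : (TwoSidedIdeal.ker diagFst : Set Rring) = Il := by
  ext x
  obtain ⟨a, b, c, d, rfl⟩ := exists_eq_mm x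
  simp [TwoSidedIdeal.mem_ker, Il, mm_inj]

theorem coe_ker_diagSnd : (TwoSidedIdeal.ker diagSnd : Set Rring) = Ir := by
  ext x
  obtain ⟨a, b, c, d, rfl⟩ := exists_eq_mm x
  simp [TwoSidedIdeal.mem_ker, Ir, mm_inj]

theorem corner_diagFst (x : Rring) : mm 1 0 0 0 * x * mm 1 0 0 0 = mm (diagFst x) 0 0 0 := by
  obtain ⟨a, b, c, d, rfl⟩ := exists_eq_mm x
  simp [mm_mul]

theorem corner_diagSnd (x : Rring) : mm 0 1 0 0 * x * mm 0 1 0 0 = mm 0 (diagSnd x) 0 0 := by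
  obtain ⟨a, b, c, d, rfl⟩ := exists_eq_mm x
  simp [mm_mul]

theorem le_ker_diagFst_or_le_ker_diagSnd_or_eq_top (K : TwoSidedIdeal Rring) :
    K ≤ TwoSidedIdeal.ker diagFst ∨ K ≤ TwoSidedIdeal.ker diagSnd ∨ K = ⊤ := by
  by_contra! ⟨hfst, hsnd, hK⟩
  obtain ⟨x, hxK, hx⟩ := SetLike.not_le_iff_exists.1 hfst
  obtain ⟨y, hyK, hy⟩ := SetLike.not_le_iff_exists.1 hsnd
  rw [TwoSidedIdeal.mem_ker] at hx hy
  have eq_one_of_ne_zero : ∀ z : ZMod 2, z ≠ 0 → z = 1 := by decide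
  have he₁ : mm 1 0 0 0 ∈ K := by
    simpa [corner_diagFst, eq_one_of_ne_zero _ hx] using
      K.mul_mem_right _ (mm 1 0 0 0) (K.mul_mem_left (mm 1 0 0 0) _ hxK)
  have he₂ : mm 0 1 0 0 ∈ K := by
    simpa [corner_diagSnd, eq_one_of_ne_zero _ hy] using
      K.mul_mem_right _ (mm 0 1 0 0) (K.mul_mem_left (mm 0 1 0 0) _ hyK)
  refine hK (TwoSidedIdeal.eq_top K ?_)
  simpa [mm_add, mm_one] using K.add_mem he₁ he₂

theorem not_ker_diagFst_le_ker_diagSnd :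
    ¬ TwoSidedIdeal.ker diagFst ≤ TwoSidedIdeal.ker diagSnd := fun h => by
  simpa [TwoSidedIdeal.mem_ker] using h ((TwoSidedIdeal.mem_ker _).2 (diagFst_mm 0 1 0 0))

theorem not_ker_diagSnd_le_ker_diagFst :
    ¬ TwoSidedIdeal.ker diagSnd ≤ TwoSidedIdeal.ker diagFst := fun h => by
  simpa [TwoSidedIdeal.mem_ker] using h ((TwoSidedIdeal.mem_ker _).2 (diagSnd_mm 1 0 0 0))

theorem Il_ncard : Il.ncard = 8 := by
  have : Il = Set.range fun p : ZMod 2 × ZMod 2 × ZMod 2 => mm 0 p.1 p.2.1 p.2.2 := by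
    ext x; simp [Il, eq_comm]
  rw [this, Set.ncard_range_of_injective fun p q h => by simpa [mm_inj, Prod.ext_iff] using h]
  simp

theorem Ir_ncard : Ir.ncard = 8 := by
  have : Ir = Set.range fun p : ZMod 2 × ZMod 2 × ZMod 2 => mm p.1 0 p.2.1 p.2.2 := by
    ext x; simp [Ir, eq_comm]
  rw [this, Set.ncard_range_of_injective fun p q h => by simpa [mm_inj, Prod.ext_iff] using h]
  simp

/-- I_l and I_r are two-sided ideals of R of cardinality 8; each is a maximal two-sided
ideal (i.e. a coatom in the lattice of two-sided ideals), and they are the only maximal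
two-sided ideals of R. -/
theorem maximal_two_sided_ideals :
    (∃ Kl : TwoSidedIdeal Rring, (Kl : Set Rring) = Il) ∧
    (∃ Kr : TwoSidedIdeal Rring, (Kr : Set Rring) = Ir) ∧
    Il.ncard = 8 ∧ Ir.ncard = 8 ∧
    (∀ K : TwoSidedIdeal Rring,
      IsCoatom K ↔ ((K : Set Rring) = Il ∨ (K : Set Rring) = Ir)) := by
  refine ⟨⟨_, coe_ker_diagFst⟩, ⟨_, coe_ker_diagSnd⟩, Il_ncard, Ir_ncard, fun K => ?_⟩
  rw [← coe_ker_diagFst, ← coe_ker_diagSnd, SetLike.coe_set_eq, SetLike.coe_set_eq]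
  exact isCoatom_iff_eq_or_eq_of_forall_le_or_le_or_eq_top
    le_ker_diagFst_or_le_ker_diagSnd_or_eq_top (TwoSidedIdeal.ker_ne_top _)
    (TwoSidedIdeal.ker_ne_top _) not_ker_diagFst_le_ker_diagSnd not_ker_diagSnd_le_ker_diagFst K
end

section
/- For each of the nine distinguished generators (x,y), the cyclic left submodule R(x,y) contains no unimodular vector; in particular each generator (x,y) itself is not unimodular. -/
open Matrix

/-- The cyclic left submodule R(x,y) = {(αx, αy) : α ∈ R} of R², as a set of vectors. -/
def RM (x y : Rring) : Set (Rring × Rring) := {p | ∃ α : Rring, p = (α * x, α * y)}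

def t : Rring := mm 0 0 1 0
def f : Rring := mm 0 0 1 1
def s : Rring := mm 0 0 0 1
def e : Rring := mm 0 1 0 0
def u : Rring := mm 0 1 1 0
def v : Rring := mm 0 1 1 1
def w : Rring := mm 0 1 0 1

/-- The nine distinguished generators. -/
def gens : List (Rring × Rring) :=
  [(t, e), (f, e), (s, e), (e, u), (e, v), (e, w), (e, s), (e, f), (e, t)]

/-!
Reading off the top-left entry `a` of `m(a,b,c,d)` is a ring homomorphism `R → GF(2)`, and both
coordinates of each of the nine generators lie in its kernel. Hence so do both coordinates of every
vector of `R(x,y)`, and applying the homomorphism to `xc + yd = 1` would give `0 = 1` in `GF(2)`.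
-/

theorem not_exists_mul_add_mul_eq_one_of_map_eq_zero {R S : Type*} [Semiring R] [Semiring S]
    [Nontrivial S] (φ : R →+* S) {x y : R} (hx : φ x = 0) (hy : φ y = 0) :
    ¬ ∃ c d : R, x * c + y * d = 1 := by
  rintro ⟨c, d, h⟩
  simpa [hx, hy] using congrArg φ h

def corner : Rring →+* ZMod 2 where
  toFun A := A.val 0 0
  map_one' := rfl
  map_mul' A B := by
    obtain ⟨a, b, c, d, hA⟩ := A.2
    obtain ⟨a', b', c', d', hB⟩ := B.2
    change (A.val * B.val) 0 0 = A.val 0 0 * B.val 0 0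
    rw [hA, hB, m_mul]
    rfl
  map_zero' := rfl
  map_add' _ _ := rfl

theorem corner_mm (a b c d : ZMod 2) : corner (mm a b c d) = a := rfl

theorem not_exists_of_mem_RM_of_corner_eq_zero {x y : Rring} (hx : corner x = 0)
    (hy : corner y = 0) : ∀ p ∈ RM x y, ¬ ∃ c d : Rring, p.1 * c + p.2 * d = 1 := by
  rintro p ⟨α, rfl⟩
  exact not_exists_mul_add_mul_eq_one_of_map_eq_zero corner
    (by rw [map_mul, hx, mul_zero]) (by rw [map_mul, hy, mul_zero])

/-- For each of the nine distinguished generators (x,y), the submodule R(x,y) contains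
no unimodular vector; in particular the generator (x,y) itself is not unimodular. -/
theorem nine_submodules_nonunimodular :
    ∀ g ∈ gens, (∀ p ∈ RM g.1 g.2, ¬ ∃ c d : Rring, p.1 * c + p.2 * d = 1) ∧
      ¬ ∃ c d : Rring, g.1 * c + g.2 * d = 1 := by
  intro g hg
  have hz : corner g.1 = 0 ∧ corner g.2 = 0 := by
    fin_cases hg <;> exact ⟨corner_mm .., corner_mm ..⟩
  exact ⟨not_exists_of_mem_RM_of_corner_eq_zero hz.1 hz.2,
    not_exists_mul_add_mul_eq_one_of_map_eq_zero corner hz.1 hz.2⟩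
end

section
/- Exactly six of the 15 synthemes L have the property that the β-image of L is contained in three of the nine distinguished submodules R(x,y), and each of the remaining nine synthemes has its β-image contained in exactly one of the nine submodules. -/
open Matrix

/-- A duad: a 2-element subset of the 6-element set. -/
def IsDuad (p : Finset (Fin 6)) : Prop := p.card = 2

/-- A syntheme: a set of three duads partitioning the 6-element set. -/
def IsSyntheme (L : Finset (Finset (Fin 6))) : Prop :=
  L.card = 3 ∧ (∀ p ∈ L, IsDuad p) ∧ ∀ i : Fin 6, ∃! p, p ∈ L ∧ i ∈ p

/-- The bijection β from the 15 duads (2-subsets of Fin 6, with 0,…,5 standing for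
1,…,6) to the 15 nonzero vectors of J × J. -/
def β (p : Finset (Fin 6)) : Rring × Rring :=
  if p = {0, 1} then (t, t)
  else if p = {0, 2} then (f, t)
  else if p = {0, 3} then (0, s)
  else if p = {0, 4} then (t, s)
  else if p = {0, 5} then (f, 0)
  else if p = {1, 2} then (s, 0)
  else if p = {1, 3} then (t, f)
  else if p = {1, 4} then (0, f)
  else if p = {1, 5} then (s, t)
  else if p = {2, 3} then (f, f)
  else if p = {2, 4} then (s, f)
  else if p = {2, 5} then (0, t)
  else if p = {3, 4} then (t, 0)
  else if p = {3, 5} then (f, s)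
  else if p = {4, 5} then (s, s)
  else 0

/-- D(x,y): the set of duads whose β-image lies in the submodule R(x,y). -/
def Dset (x y : Rring) : Set (Finset (Fin 6)) := {p | IsDuad p ∧ β p ∈ RM x y}

/-- The number of the nine distinguished submodules containing the β-image of the
syntheme L. -/
noncomputable def Ncount (L : Finset (Finset (Fin 6))) : ℕ :=
  {M : Set (Rring × Rring) | (∃ g ∈ gens, M = RM g.1 g.2) ∧ ∀ q ∈ L, β q ∈ M}.ncard

/-!
R has sixteen elements, so membership in a cyclic submodule R(x,y) is decidable by trying every
α ∈ R. Each distinguished generator lies in no other distinguished submodule, so the nine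
submodules are distinct and `Ncount L` is the number of distinguished generators whose submodule
contains β(L). A syntheme is a triple of duads covering every point exactly once, so the fifteen
synthemes are found among the 455 triples of duads, and the counts are then evaluated.
-/

open Finset

lemma mm_surjective (A : Rring) : ∃ a b c d, mm a b c d = A := by
  obtain ⟨_, a, b, c, d, rfl⟩ := A
  exact ⟨a, b, c, d, rfl⟩

instance : Fintype Rring :=
  Fintype.ofSurjective (fun x : ZMod 2 × ZMod 2 × ZMod 2 × ZMod 2 => mm x.1 x.2.1 x.2.2.1 x.2.2.2)
    fun A => by
      obtain ⟨a, b, c, d, rfl⟩ := mm_surjective A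
      exact ⟨(a, b, c, d), rfl⟩

instance (x y : Rring) : DecidablePred (· ∈ RM x y) := fun p =>
  inferInstanceAs (Decidable (∃ α : Rring, p = (α * x, α * y)))

lemma mem_RM_self (x y : Rring) : (x, y) ∈ RM x y := ⟨1, by simp⟩

set_option maxRecDepth 10000 in
lemma gens_eq_of_mem_RM : ∀ g ∈ gens, ∀ g' ∈ gens, g ∈ RM g'.1 g'.2 → g = g' := by
  decide

lemma RM_injOn_gens : Set.InjOn (fun g : Rring × Rring => RM g.1 g.2) {g | g ∈ gens} :=
  fun g hg g' hg' (h : RM g.1 g.2 = RM g'.1 g'.2) =>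
    gens_eq_of_mem_RM g hg g' hg' (h ▸ mem_RM_self g.1 g.2)

lemma ncard_sep_image_list_eq_card_filter {α β : Type*} [DecidableEq α] (l : List α)
    (F : α → β) (hF : Set.InjOn F {a | a ∈ l}) (P : β → Prop) [DecidablePred fun a => P (F a)] :
    {b | (∃ a ∈ l, b = F a) ∧ P b}.ncard = #{a ∈ l.toFinset | P (F a)} := by
  have himage : {b | (∃ a ∈ l, b = F a) ∧ P b} = F '' ↑{a ∈ l.toFinset | P (F a)} := by
    ext b
    simp only [Set.mem_ofPred_eq, coe_filter, List.mem_toFinset, Set.mem_image]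
    constructor
    · rintro ⟨⟨a, ha, rfl⟩, hP⟩
      exact ⟨a, ⟨ha, hP⟩, rfl⟩
    · rintro ⟨a, ⟨ha, hP⟩, rfl⟩
      exact ⟨⟨a, ha, rfl⟩, hP⟩
  rw [himage, (hF.mono fun a ha => by simp_all).ncard_image, Set.ncard_coe_finset]

def synthemes : Finset (Finset (Finset (Fin 6))) :=
  {L ∈ (univ.powersetCard 2).powersetCard 3 | ∀ i, #{p ∈ L | i ∈ p} = 1}

lemma isSyntheme_iff_mem_synthemes (L : Finset (Finset (Fin 6))) :
    IsSyntheme L ↔ L ∈ synthemes := by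
  simp only [IsSyntheme, IsDuad, synthemes, mem_filter, mem_powersetCard, subset_iff,
    mem_univ, implies_true, true_and, card_eq_one_iff_existsUnique]
  tauto

def containingGens (L : Finset (Finset (Fin 6))) : Finset (Rring × Rring) :=
  {g ∈ gens.toFinset | ∀ q ∈ L, β q ∈ RM g.1 g.2}

lemma Ncount_eq_card_containingGens (L : Finset (Finset (Fin 6))) :
    Ncount L = #(containingGens L) :=
  ncard_sep_image_list_eq_card_filter gens _ RM_injOn_gens (fun M => ∀ q ∈ L, β q ∈ M)

lemma card_synthemes_containingGens_eq_three :
    #{L ∈ synthemes | #(containingGens L) = 3} = 6 := by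
  decide +kernel

lemma card_synthemes_containingGens_eq_one :
    #{L ∈ synthemes | #(containingGens L) = 1} = 9 := by
  decide +kernel

lemma card_synthemes_containingGens_eq_three_or_one :
    #{L ∈ synthemes | #(containingGens L) = 3 ∨ #(containingGens L) = 1} = synthemes.card := by
  decide +kernel

/-- Exactly six of the 15 synthemes have their β-image contained in three of the nine
distinguished submodules; each of the remaining nine synthemes has its β-image contained
in exactly one of the nine submodules. -/
theorem six_synthemes_in_three_submodules :
    {L | IsSyntheme L ∧ Ncount L = 3}.ncard = 6 ∧
    {L | IsSyntheme L ∧ Ncount L = 1}.ncard = 9 ∧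
    (∀ L, IsSyntheme L → Ncount L = 3 ∨ Ncount L = 1) := by
  have hset (k : ℕ) :
      {L | IsSyntheme L ∧ Ncount L = k} = ↑{L ∈ synthemes | #(containingGens L) = k} := by
    ext L
    simp [isSyntheme_iff_mem_synthemes, Ncount_eq_card_containingGens]
  refine ⟨?_, ?_, fun L hL => ?_⟩
  · rw [hset, Set.ncard_coe_finset, card_synthemes_containingGens_eq_three]
  · rw [hset, Set.ncard_coe_finset, card_synthemes_containingGens_eq_one]
  · rw [Ncount_eq_card_containingGens]
    exact card_filter_eq_iff.mp card_synthemes_containingGens_eq_three_or_one L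
      ((isSyntheme_iff_mem_synthemes L).mp hL)
end
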